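/- Let X₁, X₂ ∈ SL(2,ℂ) with tr(X₁) = tr(X₂) = t, Y = X₂X₁⁻¹, s = tr(Y), β = ω_k(s), γ = ω_{k+1}(s), and A = Y^k X₂ Y^{-k} X₁. Then A = I if and only if γ = β or X₂X₁ = I. -/

import Mathlib

/-!
Put `W = Y ^ k * X₂`. Since `X₂ = Y * X₁`, also `W = Y ^ (k + 1) * X₁`, and the Chebyshev expansion
`Y ^ (k + 1) = γ • Y - β • 1` gives `W = γ • X₂ - β • X₁` as matrices. On the other hand
`A = W * X₂ * W⁻¹ * X₁`, so `A = 1` iff `W * X₂ = X₁⁻¹ * W`. Expanding with Cayley–Hamilton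
(`Xᵢ * Xᵢ = t • Xᵢ - 1`, `X₁⁻¹ = t • 1 - X₁`), all terms cancel except
`W * X₂ - X₁⁻¹ * W = (γ - β) • (X₁ * X₂ - 1)`.
-/

open Matrix
open scoped MatrixGroups

namespace Matrix

variable {R : Type*} [CommRing R]

theorem mul_self_fin_two (M : Matrix (Fin 2) (Fin 2) R) :
    M * M = M.trace • M - M.det • 1 := by
  ext i j
  fin_cases i <;> fin_cases j <;>
    simp [mul_apply, trace_fin_two, det_fin_two] <;> ring

namespace SpecialLinearGroup

theorem SL2_mul_self (g : SL(2, R)) :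
    (g : Matrix (Fin 2) (Fin 2) R) * g = (g : Matrix (Fin 2) (Fin 2) R).trace • g - 1 := by
  rw [mul_self_fin_two, g.det_coe, one_smul]

theorem SL2_coe_inv (g : SL(2, R)) :
    ((g⁻¹ : SL(2, R)) : Matrix (Fin 2) (Fin 2) R) =
      (g : Matrix (Fin 2) (Fin 2) R).trace • 1 - g := by
  rw [coe_inv, adjugate_fin_two]
  ext i j
  fin_cases i <;> fin_cases j <;> simp [trace_fin_two]

theorem SL2_coe_zpow (g : SL(2, R)) (w : ℤ → R) (hw0 : w 0 = 0) (hw1 : w 1 = 1)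
    (hrec : ∀ j : ℤ, w (j + 1) = (g : Matrix (Fin 2) (Fin 2) R).trace * w j - w (j - 1))
    (n : ℤ) :
    ((g ^ n : SL(2, R)) : Matrix (Fin 2) (Fin 2) R) =
      w n • (g : Matrix (Fin 2) (Fin 2) R) - w (n - 1) • 1 := by
  have hg := SL2_mul_self g
  induction n using Int.induction_on with
  | zero =>
    have hwm1 : w (-1) = -1 := by
      have h := hrec 0
      rw [zero_add, zero_sub, hw0, hw1, mul_zero, zero_sub] at h
      linear_combination h
    simp [hw0, hwm1]
  | succ n ih =>
    rw [_root_.zpow_add_one, coe_mul, ih, add_sub_cancel_right]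
    simp only [sub_mul, smul_mul_assoc, one_mul, hg]
    match_scalars
    · linear_combination -hrec n
    · ring
  | pred n ih =>
    have h := hrec (-n - 1)
    rw [sub_add_cancel] at h
    rw [_root_.zpow_sub_one, coe_mul, ih, SL2_coe_inv]
    simp only [sub_mul, mul_sub, smul_mul_assoc, mul_smul_comm, one_mul, mul_one, hg]
    match_scalars
    · ring
    · linear_combination h

theorem SL2_mul_eq_inv_mul_iff [IsDomain R] {X₁ X₂ W : SL(2, R)} {β γ : R}
    (htr : (X₁ : Matrix (Fin 2) (Fin 2) R).trace = (X₂ : Matrix (Fin 2) (Fin 2) R).trace)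
    (hW : (W : Matrix (Fin 2) (Fin 2) R) = γ • (X₂ : Matrix (Fin 2) (Fin 2) R) - β • ↑X₁) :
    W * X₂ = X₁⁻¹ * W ↔ γ = β ∨ X₁ * X₂ = 1 := by
  have key : ((W * X₂ : SL(2, R)) : Matrix (Fin 2) (Fin 2) R) - ↑(X₁⁻¹ * W) =
      (γ - β) • (((X₁ * X₂ : SL(2, R)) : Matrix (Fin 2) (Fin 2) R) - 1) := by
    rw [coe_mul, coe_mul, coe_mul, SL2_coe_inv, hW]
    simp only [sub_mul, mul_sub, smul_mul_assoc, mul_smul_comm, one_mul, SL2_mul_self, htr]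
    module
  calc W * X₂ = X₁⁻¹ * W
      ↔ ((W * X₂ : SL(2, R)) : Matrix (Fin 2) (Fin 2) R) = ↑(X₁⁻¹ * W) := Subtype.ext_iff
    _ ↔ (γ - β) • (((X₁ * X₂ : SL(2, R)) : Matrix (Fin 2) (Fin 2) R) - 1) = 0 := by
      rw [← key, sub_eq_zero]
    _ ↔ γ = β ∨ X₁ * X₂ = 1 := by
      rw [smul_eq_zero, sub_eq_zero, sub_eq_zero, ← coe_one]
      exact or_congr_right Subtype.ext_iff.symm

end SpecialLinearGroup

end Matrix

theorem sl2_A_eq_one_iff (X₁ X₂ Y A : Matrix.SpecialLinearGroup (Fin 2) ℂ)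
    (hY : Y = X₂ * X₁⁻¹) (t s : ℂ)
    (h1 : (X₁ : Matrix (Fin 2) (Fin 2) ℂ).trace = t)
    (h2 : (X₂ : Matrix (Fin 2) (Fin 2) ℂ).trace = t)
    (hs : (Y : Matrix (Fin 2) (Fin 2) ℂ).trace = s)
    (w : ℤ → ℂ) (hw0 : w 0 = 0) (hw1 : w 1 = 1)
    (hrec : ∀ j : ℤ, w (j + 1) = s * w j - w (j - 1)) (k : ℤ)
    (β γ : ℂ) (hβ : β = w k) (hγ : γ = w (k + 1))
    (hA : A = Y ^ k * X₂ * Y ^ (-k) * X₁) :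
    A = 1 ↔ γ = β ∨ X₂ * X₁ = 1 := by
  subst hs
  have hX₂ : X₂ = Y * X₁ := by rw [hY, inv_mul_cancel_right]
  have hW : ((Y ^ k * X₂ : SL(2, ℂ)) : Matrix (Fin 2) (Fin 2) ℂ) =
      γ • (X₂ : Matrix (Fin 2) (Fin 2) ℂ) - β • ↑X₁ := by
    have hshift : Y ^ k * X₂ = Y ^ (k + 1) * X₁ := by
      rw [hX₂, ← mul_assoc, ← _root_.zpow_add_one]
    rw [hshift, hX₂, Matrix.SpecialLinearGroup.coe_mul, Matrix.SpecialLinearGroup.coe_mul,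
      Matrix.SpecialLinearGroup.SL2_coe_zpow Y w hw0 hw1 hrec, add_sub_cancel_right, ← hβ, ← hγ,
      sub_mul, smul_mul_assoc, smul_mul_assoc, one_mul]
  have hAW : A = (Y ^ k * X₂) * X₂ * (Y ^ k * X₂)⁻¹ * X₁ := by rw [hA]; group
  rw [hAW, mul_eq_one_iff_eq_inv, mul_inv_eq_iff_eq_mul,
    Matrix.SpecialLinearGroup.SL2_mul_eq_inv_mul_iff (h1.trans h2.symm) hW, mul_eq_one_comm]
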